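/- arXiv:2208.04934 — 5 statements merged into one kernel-verified Lean document; each statement's English description precedes it below -/
import Mathlib

section
/- Let (T, m) be a complete local (Noetherian) ring with dim T ≥ 1 and let P = {C, {C_i}_{i=1}^n} be a feasible partition of a finite collection C of incomparable non-maximal prime ideals of T. If (R_i)_{i ∈ Z^+} is a countable chain R_1 ⊆ R_2 ⊆ ⋯ of CIP-subrings of T (with respect to P), then R := ∪_{i ∈ Z^+} R_i is a CIP-subring of T. -/
/-! Common definitions: regular/singular primes, catenary and universally catenary rings,
excellent local rings, quasi-local subrings, completions of subrings, the invariants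
`d₁(T)` and `d₂(T)`, feasible partitions and (C)IP-subrings, partitions of `Min(T)` and
(C)GIP-subrings, and witnesses for "T is the completion of a countable (excellent) local
ring". -/

universe u v

section RegularDefs

/-- A ring is a regular local ring if it is Noetherian, local, and its maximal ideal
can be generated by `dim R` many elements. -/
def IsRegularLocal (R : Type v) [CommRing R] : Prop :=
  ∃ _h : IsLocalRing R, IsNoetherianRing R ∧
    ∃ s : Finset R, Ideal.span (s : Set R) = IsLocalRing.maximalIdeal R ∧
      (s.card : WithBot (WithTop ℕ)) = ringKrullDim R

/-- A ring is regular if it is Noetherian and all its localizations at primes are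
regular local rings. -/
def IsRegularRing' (R : Type v) [CommRing R] : Prop :=
  IsNoetherianRing R ∧ ∀ (p : Ideal R) [p.IsPrime], IsRegularLocal (Localization.AtPrime p)

/-- A (prime) ideal `p` of `T` is nonsingular if `T_p` is a regular local ring. -/
def NonsingularAt {T : Type v} [CommRing T] (p : Ideal T) : Prop :=
  ∃ hp : p.IsPrime, IsRegularLocal (@Localization.AtPrime T _ p hp)

/-- `T_p` is a field. -/
def FieldAtPrime {T : Type v} [CommRing T] (p : Ideal T) : Prop :=
  ∃ hp : p.IsPrime, IsField (@Localization.AtPrime T _ p hp)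

end RegularDefs

section Catenary

/-- A chain is saturated if each step is a covering relation. -/
def IsSaturatedChain {α : Type v} [Preorder α] (c : LTSeries α) : Prop :=
  ∀ i : Fin c.length, c.toFun i.castSucc ⋖ c.toFun i.succ

/-- A ring is catenary if any two saturated chains of primes with the same endpoints
have the same length. -/
def IsCatenaryRing (R : Type v) [CommRing R] : Prop :=
  ∀ c₁ c₂ : LTSeries (PrimeSpectrum R),
    IsSaturatedChain c₁ → IsSaturatedChain c₂ →
      c₁.head = c₂.head → c₁.last = c₂.last → c₁.length = c₂.length

/-- A ring is universally catenary if every finite type algebra over it is catenary. -/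
def IsUniversallyCatenary (A : Type v) [CommRing A] : Prop :=
  ∀ (B : Type v) [CommRing B] [Algebra A B], Algebra.FiniteType A B → IsCatenaryRing B

end Catenary

section Excellent

/-- The formal fibers of a local ring `A` are geometrically regular: for every
prime `p` of `A` and every finite field extension `L` of the residue field
`k(p) = Frac(A/p)` (the residue field of the localization of `A` at `p`),
the ring `Â ⊗_A L` is regular, where `Â` is the completion of `A`
at its maximal ideal. -/
def HasGeomRegularFormalFibers (A : Type u) [CommRing A] [IsLocalRing A] : Prop :=
  ∀ (p : Ideal A) [p.IsPrime] (L : Type u) [Field L] [Algebra A L]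
    [Algebra (IsLocalRing.ResidueField (Localization.AtPrime p)) L]
    [IsScalarTower A (IsLocalRing.ResidueField (Localization.AtPrime p)) L],
    FiniteDimensional (IsLocalRing.ResidueField (Localization.AtPrime p)) L →
      IsRegularRing'
        (TensorProduct A (AdicCompletion (IsLocalRing.maximalIdeal A) A) L)

/-- A local ring is excellent if it is Noetherian, universally catenary,
and its formal fibers are geometrically regular. -/
def IsExcellentLocalRing (A : Type u) [CommRing A] [IsLocalRing A] : Prop :=
  IsNoetherianRing A ∧ IsUniversallyCatenary A ∧ HasGeomRegularFormalFibers A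

end Excellent

section Subrings

variable {T : Type u} [CommRing T] [IsLocalRing T]

/-- A subring `(R, R ∩ m)` of a local ring `(T, m)` is quasi-local with maximal
ideal `R ∩ m`. -/
def IsQuasiLocalSubring (R : Subring T) : Prop :=
  ∃ h : IsLocalRing R,
    @IsLocalRing.maximalIdeal R _ h = (IsLocalRing.maximalIdeal T).comap R.subtype

/-- The `(S ∩ m)`-adic completion of the subring `S` of the local ring `(T, m)` is equal
to `T`, compatibly with the inclusion `S ⊆ T`. -/
def IsCompletionOfSubring (S : Subring T) : Prop :=
  ∃ e : AdicCompletion ((IsLocalRing.maximalIdeal T).comap S.subtype) S ≃+* T,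
    ∀ s : S,
      e (algebraMap S (AdicCompletion ((IsLocalRing.maximalIdeal T).comap S.subtype) S) s)
        = (s : T)

end Subrings

section MinimalPrimeInvariants

variable (T : Type u) [CommRing T]

/-- The equivalence relation `∼₁` on the minimal primes of `T`: `p ∼₁ q` iff `p = q` or
(`T_p` and `T_q` are fields and `dim(T/p) = dim(T/q)`). -/
def sim1 : Setoid {p : Ideal T // p ∈ minimalPrimes T} where
  r p q := p = q ∨ (FieldAtPrime p.1 ∧ FieldAtPrime q.1 ∧
      ringKrullDim (T ⧸ p.1) = ringKrullDim (T ⧸ q.1))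
  iseqv := by
    constructor
    · exact fun x => Or.inl rfl
    · rintro x y (rfl | ⟨h1, h2, h3⟩)
      · exact Or.inl rfl
      · exact Or.inr ⟨h2, h1, h3.symm⟩
    · rintro x y z (rfl | ⟨h1, h2, h3⟩) h
      · exact h
      · rcases h with rfl | ⟨h4, h5, h6⟩
        · exact Or.inr ⟨h1, h2, h3⟩
        · exact Or.inr ⟨h1, h5, h3.trans h6⟩

/-- The equivalence relation `∼₂` on the minimal primes of `T`:
`p ∼₂ q` iff `dim(T/p) = dim(T/q)`. -/
def sim2 : Setoid {p : Ideal T // p ∈ minimalPrimes T} where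
  r p q := ringKrullDim (T ⧸ p.1) = ringKrullDim (T ⧸ q.1)
  iseqv := ⟨fun _ => rfl, Eq.symm, Eq.trans⟩

/-- `|d₁(T)|`, the number of equivalence classes of `Min(T)` under `∼₁`. -/
noncomputable def d1Card : ℕ := Nat.card (Quotient (sim1 T))

/-- `|d₂(T)|`, the number of equivalence classes of `Min(T)` under `∼₂`. -/
noncomputable def d2Card : ℕ := Nat.card (Quotient (sim2 T))

end MinimalPrimeInvariants

section Partitions

/-- A feasible partition `P = {C, {C_i}_{i=1}^n}` of a finite collection `C` of
incomparable non-maximal prime ideals of the local ring `(T, m)`: for every associated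
prime `r` of `T` there is some `q ∈ C` with `r ⊆ q`, and there is exactly one index `l`
such that every `q ∈ C` containing `r` lies in `C_l`. -/
structure FeasiblePartition (T : Type u) [CommRing T] [IsLocalRing T] (n : ℕ) where
  C : Set (Ideal T)
  part : Fin n → Set (Ideal T)
  finite : C.Finite
  primes : ∀ p ∈ C, p.IsPrime
  nonmaximal : ∀ p ∈ C, p ≠ IsLocalRing.maximalIdeal T
  incomparable : ∀ p ∈ C, ∀ q ∈ C, p ≠ q → ¬p ≤ q
  part_nonempty : ∀ i, (part i).Nonempty
  part_subset : ∀ i, part i ⊆ C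
  part_disjoint : ∀ i j, i ≠ j → Disjoint (part i) (part j)
  part_cover : ∀ p ∈ C, ∃ i, p ∈ part i
  feasible : ∀ r ∈ associatedPrimes T T,
    (∃ q ∈ C, r ≤ q) ∧ (∃! l, ∀ q ∈ C, r ≤ q → q ∈ part l)

variable {T : Type u} [CommRing T] [IsLocalRing T] {n : ℕ}

/-- An IP-subring (intersection-preserving subring) of `T` with respect to a
feasible partition `P`. -/
def IsIPSubring (P : FeasiblePartition T n) (R : Subring T) : Prop :=
  IsQuasiLocalSubring R ∧
  Infinite R ∧
  (∀ p ∈ P.C, ∀ q ∈ minimalPrimes T, q ≤ p → p.comap R.subtype = q.comap R.subtype) ∧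
  (∀ p ∈ P.C, ∀ p' ∈ P.C,
    ((∃ i, p ∈ P.part i ∧ p' ∈ P.part i) ↔ p.comap R.subtype = p'.comap R.subtype)) ∧
  (∀ p ∈ P.C, ∀ r : T, r ∈ R → r ∈ p → ∃ t : T, t * r = 0 ∧ t ∉ p)

/-- A CIP-subring is a countable IP-subring. -/
def IsCIPSubring (P : FeasiblePartition T n) (R : Subring T) : Prop :=
  IsIPSubring P R ∧ Countable R

end Partitions

section MinPartitions

/-- A partition `P = {C_1, …, C_n}` of `Min(T)` such that every class containing a
singular minimal prime is a singleton. -/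
structure MinPartition (T : Type u) [CommRing T] (n : ℕ) where
  part : Fin n → Set (Ideal T)
  part_nonempty : ∀ i, (part i).Nonempty
  part_subset : ∀ i, part i ⊆ minimalPrimes T
  part_disjoint : ∀ i j, i ≠ j → Disjoint (part i) (part j)
  part_cover : ∀ p ∈ minimalPrimes T, ∃ i, p ∈ part i
  singular_singleton : ∀ i, ∀ p ∈ part i, ¬NonsingularAt p → part i = {p}

variable {T : Type u} [CommRing T] [IsLocalRing T] {n : ℕ}

/-- A GIP-subring (generalized intersection-preserving subring) of `T` with respect to a
partition `P` of `Min(T)`. -/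
def IsGIPSubring (P : MinPartition T n) (S : Subring T) : Prop :=
  IsQuasiLocalSubring S ∧
  Infinite S ∧
  (∀ p ∈ minimalPrimes T, ∀ p' ∈ minimalPrimes T,
    (p.comap S.subtype = p'.comap S.subtype ↔ ∃ i, p ∈ P.part i ∧ p' ∈ P.part i)) ∧
  (∀ p ∈ minimalPrimes T, NonsingularAt p →
    ∀ a : T, a ∈ S → a ∈ p → ∃ t : T, t * a = 0 ∧ t ∉ p)

/-- A CGIP-subring is a countable GIP-subring. -/
def IsCGIPSubring (P : MinPartition T n) (S : Subring T) : Prop :=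
  IsGIPSubring P S ∧ Countable S

end MinPartitions

section Witness

/-- A countable excellent local ring whose completion (at its maximal ideal) is
isomorphic to `T`. -/
structure ExcellentCompletionWitness (T : Type u) [CommRing T] [IsLocalRing T] where
  A : Type u
  [commRing : CommRing A]
  [isLocal : IsLocalRing A]
  countable : Countable A
  excellent : IsExcellentLocalRing A
  completion : Nonempty (AdicCompletion (IsLocalRing.maximalIdeal A) A ≃+* T)

attribute [instance] ExcellentCompletionWitness.commRing ExcellentCompletionWitness.isLocal

/-- A countable local (Noetherian) ring whose completion (at its maximal ideal) is
isomorphic to `T`. -/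
structure LocalCompletionWitness (T : Type u) [CommRing T] [IsLocalRing T] where
  A : Type u
  [commRing : CommRing A]
  [isNoetherian : IsNoetherianRing A]
  [isLocal : IsLocalRing A]
  countable : Countable A
  completion : Nonempty (AdicCompletion (IsLocalRing.maximalIdeal A) A ≃+* T)

attribute [instance] LocalCompletionWitness.commRing LocalCompletionWitness.isNoetherian
  LocalCompletionWitness.isLocal

end Witness

/-- Let `(T, m)` be a complete local ring with `dim T ≥ 1` and `P` a
feasible partition of a finite collection of incomparable non-maximal primes of `T`.
The union of a countable chain of CIP-subrings of `T` is a CIP-subring of `T`. -/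
theorem statement_4 (T : Type u) [CommRing T] [IsNoetherianRing T] [IsLocalRing T]
    [IsAdicComplete (IsLocalRing.maximalIdeal T) T]
    (hdim : 1 ≤ ringKrullDim T) {n : ℕ} (P : FeasiblePartition T n)
    (R : ℕ → Subring T) (hchain : ∀ i, R i ≤ R (i + 1))
    (hCIP : ∀ i, IsCIPSubring P (R i)) :
    IsCIPSubring P (⨆ i, R i) := by
  have hmono : Monotone R := monotone_nat_of_le_succ hchain
  have hdir : Directed (· ≤ ·) R := hmono.directed_le
  set S := ⨆ i, R i with hSdef
  have hmem : ∀ x : T, x ∈ S ↔ ∃ i, x ∈ R i := fun x => Subring.mem_iSup_of_directed hdir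
  -- every element of S not in m is a unit of S
  have hunit : ∀ x : S, (x : T) ∉ IsLocalRing.maximalIdeal T → IsUnit x := by
    intro x hx
    obtain ⟨i, hi⟩ := (hmem (x : T)).1 x.2
    obtain ⟨hl, hmax⟩ := (hCIP i).1.1
    haveI := hl
    have hx' : (⟨(x : T), hi⟩ : R i) ∉ IsLocalRing.maximalIdeal (R i) := by
      rw [hmax]
      simpa [Ideal.mem_comap] using hx
    rw [IsLocalRing.mem_maximalIdeal, mem_nonunits_iff, not_not] at hx'
    have hle : R i ≤ S := le_iSup R i
    have := hx'.map (Subring.inclusion hle)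
    convert this using 1
    exact Subtype.ext rfl
  have hone : (1 : T) ∉ IsLocalRing.maximalIdeal T := by
    intro h1
    exact (IsLocalRing.maximalIdeal.isMaximal T).ne_top (Ideal.eq_top_of_isUnit_mem _ h1 isUnit_one)
  haveI : Nontrivial S := nontrivial_of_ne 1 0 (by
    intro h
    exact one_ne_zero (congrArg (Subtype.val) h))
  haveI hlocS : IsLocalRing S := by
    apply IsLocalRing.of_isUnit_or_isUnit_one_sub_self
    intro a
    by_cases ha : (a : T) ∈ IsLocalRing.maximalIdeal T
    · right
      apply hunit
      intro hcontra
      have : ((1 - a : S) : T) = 1 - (a : T) := rfl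
      rw [this] at hcontra
      have := Ideal.add_mem _ hcontra ha
      exact hone (by simpa using this)
    · exact Or.inl (hunit a ha)
  have hmaxS : IsLocalRing.maximalIdeal S = (IsLocalRing.maximalIdeal T).comap S.subtype := by
    ext x
    constructor
    · intro hnu
      rw [IsLocalRing.mem_maximalIdeal, mem_nonunits_iff] at hnu
      by_contra hx
      exact hnu (hunit x (by simpa [Ideal.mem_comap] using hx))
    · intro hx
      rw [IsLocalRing.mem_maximalIdeal, mem_nonunits_iff]
      intro hu
      have h1 : IsUnit ((x : T)) := hu.map S.subtype
      have h2 : (x : T) ∈ IsLocalRing.maximalIdeal T := by simpa [Ideal.mem_comap] using hx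
      rw [IsLocalRing.mem_maximalIdeal, mem_nonunits_iff] at h2
      exact h2 h1
  haveI hinf0 : Infinite (R 0) := (hCIP 0).1.2.1
  have hincl_inj : Function.Injective (Subring.inclusion (le_iSup R 0)) := by
    intro a b h
    have h2 : ((Subring.inclusion (le_iSup R 0)) a).1 = ((Subring.inclusion (le_iSup R 0)) b).1 :=
      congrArg Subtype.val h
    exact Subtype.ext h2
  refine ⟨⟨⟨hlocS, hmaxS⟩, Infinite.of_injective _ hincl_inj, ?_, ?_, ?_⟩, ?_⟩
  · -- (3) comap equality for minimal primes under p
    intro p hp q hq hqp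
    ext x
    simp only [Ideal.mem_comap]
    obtain ⟨i, hi⟩ := (hmem (x : T)).1 x.2
    have h3 := (hCIP i).1.2.2.1 p hp q hq hqp
    have := Ideal.ext_iff.mp h3 ⟨(x : T), hi⟩
    simpa [Ideal.mem_comap] using this
  · -- (4) same class iff comap equal
    intro p hp p' hp'
    constructor
    · rintro ⟨i, hpi, hp'i⟩
      ext x
      obtain ⟨j, hj⟩ := (hmem (x : T)).1 x.2
      have h4 := ((hCIP j).1.2.2.2.1 p hp p' hp').1 ⟨i, hpi, hp'i⟩
      have := Ideal.ext_iff.mp h4 ⟨(x : T), hj⟩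
      simpa [Ideal.mem_comap] using this
    · intro heq
      apply ((hCIP 0).1.2.2.2.1 p hp p' hp').2
      ext x
      have hx : (x : T) ∈ S := (hmem (x : T)).2 ⟨0, x.2⟩
      have := Ideal.ext_iff.mp heq ⟨(x : T), hx⟩
      simpa [Ideal.mem_comap] using this
  · -- (5) annihilator condition
    intro p hp r hr hrp
    obtain ⟨i, hi⟩ := (hmem r).1 hr
    exact (hCIP i).1.2.2.2.2 p hp r hi hrp
  · -- countability
    have hcount : (S : Set T).Countable := by
      rw [hSdef, Subring.coe_iSup_of_directed hdir]
      exact Set.countable_iUnion fun i => Set.countable_coe_iff.mp (hCIP i).2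
    exact hcount.to_subtype
end

section
/- Let S_0 ⊆ S_1 ⊆ ⋯ be a countable chain of subrings of a commutative ring R and write S = ∪_{i ≥ 0} S_i. If JR ∩ S_i = J for every i and every finitely generated ideal J of S_i, then IR ∩ S = I for every finitely generated ideal I of S. -/
/-! Common definitions: regular/singular primes, catenary and universally catenary rings,
excellent local rings, quasi-local subrings, completions of subrings, the invariants
`d₁(T)` and `d₂(T)`, feasible partitions and (C)IP-subrings, partitions of `Min(T)` and
(C)GIP-subrings, and witnesses for "T is the completion of a countable (excellent) local
ring". -/

universe u v

/-- Let `S_0 ⊆ S_1 ⊆ ⋯` be a countable chain of subrings of a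
commutative ring `R` with union `S`. If `JR ∩ S_i = J` for every `i` and every finitely
generated ideal `J` of `S_i`, then `IR ∩ S = I` for every finitely generated ideal `I` of
`S`. -/
theorem statement_5 (R : Type u) [CommRing R] (S : ℕ → Subring R)
    (hchain : ∀ i, S i ≤ S (i + 1))
    (h : ∀ (i : ℕ) (J : Ideal ↥(S i)), J.FG →
      (J.map (S i).subtype).comap (S i).subtype = J) :
    ∀ I : Ideal ↥(⨆ i, S i), I.FG →
      (I.map (⨆ i, S i : Subring R).subtype).comap (⨆ i, S i : Subring R).subtype = I := by
  intro I hI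
  obtain ⟨t, ht⟩ := hI
  have hmono : Monotone S := monotone_nat_of_le_succ hchain
  have hdir : Directed (· ≤ ·) S := hmono.directed_le
  apply le_antisymm _ (Ideal.le_comap_map)
  intro x hx
  -- find an index containing all generators and x
  have hgen : ∀ g : ↥(⨆ i, S i), (g : R) ∈ ⨆ i, S i → ∃ i, (g : R) ∈ S i := by
    intro g hg
    exact (Subring.mem_iSup_of_directed hdir).mp hg
  choose f hf using fun g : t => hgen g.1 g.1.2
  have hxS : (x : R) ∈ ⨆ i, S i := x.2
  obtain ⟨k, hk⟩ := (Subring.mem_iSup_of_directed hdir).mp hxS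
  classical
  let M : ℕ := max k (t.attach.sup f)
  have hxM : (x : R) ∈ S M := hmono (le_max_left _ _) hk
  have hgM : ∀ g : t, (g.1 : R) ∈ S M := by
    intro g
    refine hmono (le_trans ?_ (le_max_right k _)) (hf g)
    exact Finset.le_sup (Finset.mem_attach t g)
  -- generators in S M
  let gens : Set ↥(S M) := Set.range (fun g : t => (⟨(g.1 : R), hgM g⟩ : ↥(S M)))
  let J : Ideal ↥(S M) := Ideal.span gens
  have hJfg : J.FG := by
    refine ⟨t.attach.image (fun g => (⟨(g.1 : R), hgM g⟩ : ↥(S M))), ?_⟩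
    simp only [J, gens, Finset.coe_image]
    congr 1
    rw [← Set.image_univ, ← Finset.coe_univ, ← Finset.attach_eq_univ]
  -- images of generators in R coincide
  have himg : (S M).subtype '' gens = (⨆ i, S i : Subring R).subtype '' (t : Set ↥(⨆ i, S i)) := by
    ext r
    constructor
    · rintro ⟨y, ⟨g, rfl⟩, rfl⟩
      exact ⟨g.1, g.2, rfl⟩
    · rintro ⟨g, hg, rfl⟩
      exact ⟨⟨g, hgM ⟨g, hg⟩⟩, ⟨⟨g, hg⟩, rfl⟩, rfl⟩
  have hmapeq : J.map (S M).subtype = I.map (⨆ i, S i : Subring R).subtype := by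
    rw [← ht, Ideal.map_span, Ideal.map_span, himg]
  have hxJ : (⟨(x : R), hxM⟩ : ↥(S M)) ∈ J := by
    have hx' : (x : R) ∈ J.map (S M).subtype := by
      rw [hmapeq]; exact hx
    rw [← h M J hJfg]
    exact Ideal.mem_comap.mpr hx'
  -- map into I
  have hle : S M ≤ ⨆ i, S i := le_iSup S M
  have hJI : J.map (Subring.inclusion hle) ≤ I := by
    rw [Ideal.map_le_iff_le_comap]
    refine Ideal.span_le.mpr ?_
    rintro y ⟨g, rfl⟩
    refine Ideal.mem_comap.mpr ?_
    have : Subring.inclusion hle (⟨(g.1 : R), hgM g⟩ : ↥(S M)) = g.1 := by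
      ext; rfl
    rw [this]
    rw [← ht]
    exact Ideal.subset_span g.2
  have : Subring.inclusion hle (⟨(x : R), hxM⟩ : ↥(S M)) = x := by ext; rfl
  rw [← this]
  exact hJI (Ideal.mem_map_of_mem _ hxJ)
end

section
/- Let (T, m) be a complete local (Noetherian) ring with dim T ≥ 1 and let P = {C, {C_i}_{i=1}^n} be a feasible partition of a finite collection C of incomparable non-maximal prime ideals of T. Let J be an ideal of T with J ⊄ p for all p ∈ C, and let u + J ∈ T/J. If R is a CIP-subring of T, then there exists a CIP-subring S of T such that: (1) R ⊆ S ⊂ T; (2) u + J is in the image of the natural map S → T/J; (3) IT ∩ S = I for every finitely generated ideal I of S. -/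
/-! Common definitions: regular/singular primes, catenary and universally catenary rings,
excellent local rings, quasi-local subrings, completions of subrings, the invariants
`d₁(T)` and `d₂(T)`, feasible partitions and (C)IP-subrings, partitions of `Min(T)` and
(C)GIP-subrings, and witnesses for "T is the completion of a countable (excellent) local
ring". -/

universe u v

open IsLocalRing Polynomial

namespace St6



variable {T : Type u} [CommRing T]

/-- kernel of T → T_p as a set-defined ideal -/
def kker (p : Ideal T) [p.IsPrime] : Ideal T where
  carrier := {r | ∃ t, t ∉ p ∧ t * r = 0}
  add_mem' := by
    rintro a b ⟨s, hs, hsa⟩ ⟨t, ht, htb⟩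
    refine ⟨s * t, fun h => ((Ideal.IsPrime.mul_mem_iff_mem_or_mem ‹_›).1 h).elim hs ht, ?_⟩
    calc s * t * (a + b) = t * (s * a) + s * (t * b) := by ring
    _ = 0 := by rw [hsa, htb]; ring
  zero_mem' := ⟨1, (Ideal.IsPrime.ne_top ‹_›) ∘ (Ideal.eq_top_of_isUnit_mem p · isUnit_one), mul_zero 1⟩
  smul_mem' := by
    rintro c a ⟨t, ht, hta⟩
    exact ⟨t, ht, by rw [smul_eq_mul]; calc t * (c * a) = c * (t * a) := by ring
                     _ = 0 := by rw [hta, mul_zero]⟩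

lemma mem_kker {p : Ideal T} [p.IsPrime] {r : T} : r ∈ kker p ↔ ∃ t, t ∉ p ∧ t * r = 0 :=
  Iff.rfl

lemma kker_le_of_le {p q : Ideal T} [p.IsPrime] [hq : q.IsPrime] (h : q ≤ p) : kker p ≤ q := by
  rintro r ⟨t, ht, htr⟩
  rcases hq.mem_or_mem (htr ▸ q.zero_mem : t * r ∈ q) with h' | h'
  · exact absurd (h h') ht
  · exact h'

lemma kker_le_self {p : Ideal T} [p.IsPrime] : kker p ≤ p := kker_le_of_le le_rfl

lemma kker_cancel {p : Ideal T} [hp : p.IsPrime] {y z : T} (hy : y ∉ p) (h : y * z ∈ kker p) :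
    z ∈ kker p := by
  rcases h with ⟨t, ht, htz⟩
  exact ⟨t * y, fun hh => (hp.mem_or_mem hh).elim ht hy, by rw [← htz]; ring⟩

lemma kker_cancel_pow {p : Ideal T} [hp : p.IsPrime] {y z : T} (hy : y ∉ p) (d : ℕ)
    (h : y ^ d * z ∈ kker p) : z ∈ kker p := by
  induction d with
  | zero => simpa using h
  | succ d ih =>
    have e : y * (y ^ d * z) = y ^ (d+1) * z := by ring
    exact ih (kker_cancel hy (e ▸ h))




lemma not_countable_bool : ¬ Countable (ℕ → Bool) := by
  intro h
  obtain ⟨f, hf⟩ := exists_surjective_nat (ℕ → Bool)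
  obtain ⟨k, hk⟩ := hf (fun n => !(f n n))
  have := congrFun hk k
  simp at this

variable {T : Type u} [CommRing T] [IsNoetherianRing T] [IsLocalRing T]
variable [IsAdicComplete (IsLocalRing.maximalIdeal T) T]

omit [IsNoetherianRing T] [IsLocalRing T] [IsAdicComplete (maximalIdeal T) T] in
lemma smul_top_eq' (I : Ideal T) : (I • (⊤ : Submodule T T)) = I := by
  rw [Ideal.smul_eq_mul, Ideal.mul_top]

theorem uncountable_quotient (p : Ideal T) [hp : p.IsPrime]
    (hpm : p ≠ maximalIdeal T) : ¬ Countable (T ⧸ p) := by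
  set m := maximalIdeal T with hm
  set mk := Ideal.Quotient.mk p with hmk
  haveI : IsNoetherianRing (T ⧸ p) := isNoetherianRing_of_surjective T _ mk
    Ideal.Quotient.mk_surjective
  have hpm' : p ≤ m := le_maximalIdeal hp.ne_top
  set mbar : Ideal (T ⧸ p) := m.map mk with hmbar
  have h1 : mbar ≠ ⊤ := by
    intro htop
    have : (1 : T ⧸ p) ∈ mbar := htop ▸ Submodule.mem_top
    rw [hmbar, Ideal.mem_map_iff_of_surjective mk Ideal.Quotient.mk_surjective] at this
    obtain ⟨x, hx, hx1⟩ := this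
    have : x - 1 ∈ p := Ideal.Quotient.eq.1 (by rw [map_one]; exact hx1)
    have h1m : (1 : T) ∈ m := by
      have := m.sub_mem hx (hpm' this)
      simpa using this
    exact (maximalIdeal.isMaximal T).ne_top ((Ideal.eq_top_of_isUnit_mem _ h1m) isUnit_one)
  have hmbot : mbar ≠ ⊥ := by
    intro hbot
    apply hpm
    refine le_antisymm hpm' (fun x hx => ?_)
    have : mk x ∈ mbar := Ideal.mem_map_of_mem mk hx
    rw [hbot, Submodule.mem_bot] at this
    exact (Ideal.Quotient.eq_zero_iff_mem).1 this
  have hKrull : ⨅ n : ℕ, mbar ^ n = ⊥ := Ideal.iInf_pow_eq_bot_of_isDomain mbar h1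
  have hstep : ∀ n : ℕ, mbar ^ (n + 1) < mbar ^ n := by
    intro n
    refine lt_of_le_of_ne (Ideal.pow_le_pow_right (Nat.le_succ n)) ?_
    intro heq
    have hconst : ∀ j : ℕ, mbar ^ (n + 1 + j) = mbar ^ (n + 1) := by
      intro j
      induction j with
      | zero => rfl
      | succ j ih =>
        have : mbar ^ (n + 1 + (j+1)) = mbar * mbar ^ (n + 1 + j) := by ring
        rw [this, ih, heq, ← pow_succ', heq]
    have hb : mbar ^ (n + 1) = ⊥ := by
      rw [← hKrull]
      refine le_antisymm (le_iInf fun k => ?_) (iInf_le _ (n+1))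
      rcases le_or_gt k (n+1) with h | h
      · exact Ideal.pow_le_pow_right h
      · rw [show k = n + 1 + (k - (n+1)) by omega] at *
        rw [hconst]
    apply hmbot
    have : ∀ x ∈ mbar, x = 0 := by
      intro x hx
      have : x ^ (n+1) ∈ mbar ^ (n+1) := Ideal.pow_mem_pow hx _
      rw [hb, Submodule.mem_bot] at this
      exact pow_eq_zero_iff (Nat.succ_ne_zero n) |>.1 this
    exact (Submodule.eq_bot_iff _).2 this
  -- pick witnesses
  have hx : ∀ n : ℕ, ∃ v : T ⧸ p, v ∈ mbar ^ n ∧ v ∉ mbar ^ (n+1) := by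
    intro n
    obtain ⟨v, hv1, hv2⟩ := SetLike.exists_of_lt (hstep n)
    exact ⟨v, hv1, hv2⟩
  choose xb hxb1 hxb2 using hx
  have hlift : ∀ n : ℕ, ∃ t : T, t ∈ m ^ n ∧ mk t = xb n := by
    intro n
    have : xb n ∈ (m ^ n).map mk := by
      rw [Ideal.map_pow]; exact hxb1 n
    rw [Ideal.mem_map_iff_of_surjective mk Ideal.Quotient.mk_surjective] at this
    obtain ⟨t, ht, htx⟩ := this
    exact ⟨t, ht, htx⟩
  choose t ht1 ht2 using hlift
  intro hcnt
  apply not_countable_bool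
  -- the partial sums
  set g : (ℕ → Bool) → ℕ → T := fun ε i => if ε i then t i else 0 with hg
  have hgmem : ∀ ε i, g ε i ∈ m ^ i := by
    intro ε i; by_cases h : ε i <;> simp [hg, h, ht1 i, Submodule.zero_mem]
  set F : (ℕ → Bool) → ℕ → T := fun ε N => ∑ i ∈ Finset.range N, g ε i with hF
  have hcauchy : ∀ ε, ∀ {M N : ℕ}, M ≤ N →
      F ε M ≡ F ε N [SMOD ((m ^ M • ⊤ : Submodule T T))] := by
    intro ε M N hMN
    rw [SModEq.sub_mem, smul_top_eq']
    have : F ε N - F ε M = ∑ i ∈ Finset.Ico M N, g ε i := (Finset.sum_Ico_eq_sub _ hMN).symm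
    have hmem : ∑ i ∈ Finset.Ico M N, g ε i ∈ m ^ M := by
      refine Submodule.sum_mem _ (fun i hi => ?_)
      have := Finset.mem_Ico.1 hi
      exact Ideal.pow_le_pow_right this.1 (hgmem ε i)
    have : F ε M - F ε N = -(∑ i ∈ Finset.Ico M N, g ε i) := by rw [← this]; ring
    rw [this]
    exact Submodule.neg_mem _ hmem
  have hprec : ∀ ε : ℕ → Bool, ∃ L : T, ∀ n, F ε n ≡ L [SMOD ((m ^ n • ⊤ : Submodule T T))] := by
    intro ε
    exact IsPrecomplete.prec (IsAdicComplete.toIsPrecomplete) (fun {M N} h => hcauchy ε h)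
  choose L hL using hprec
  have hinj : Function.Injective (fun ε => mk (L ε)) := by
    intro ε ε' hG
    simp only at hG
    by_contra hne
    have hev : ∃ n, ε n ≠ ε' n := by
      by_contra hq; push_neg at hq; exact hne (funext hq)
    set n := Nat.find hev with hn
    have hdiff : ε n ≠ ε' n := Nat.find_spec hev
    have hlt : ∀ i < n, ε i = ε' i := fun i hi => by
      by_contra hq; exact Nat.find_min hev hi hq
    have hd : L ε - L ε' ∈ p := Ideal.Quotient.eq.1 hG
    have hA : L ε - F ε (n+1) ∈ m ^ (n+1) := by
      have := (hL ε (n+1)).symm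
      rw [SModEq.sub_mem, smul_top_eq'] at this
      exact this
    have hA' : L ε' - F ε' (n+1) ∈ m ^ (n+1) := by
      have := (hL ε' (n+1)).symm
      rw [SModEq.sub_mem, smul_top_eq'] at this
      exact this
    have hFF : F ε (n+1) - F ε' (n+1) = g ε n - g ε' n := by
      rw [hF]
      simp only [Finset.sum_range_succ]
      have : ∑ i ∈ Finset.range n, g ε i = ∑ i ∈ Finset.range n, g ε' i := by
        refine Finset.sum_congr rfl (fun i hi => ?_)
        rw [hg]; simp only
        rw [hlt i (Finset.mem_range.1 hi)]
      rw [this]; ring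
    have key : mk (g ε n - g ε' n) ∈ mbar ^ (n+1) := by
      have : g ε n - g ε' n = (L ε - L ε') - (L ε - F ε (n+1)) + (L ε' - F ε' (n+1)) := by
        rw [← hFF]; ring
      rw [this]
      have h2 : mk ((L ε - L ε') - (L ε - F ε (n+1)) + (L ε' - F ε' (n+1)))
          = mk (L ε - L ε') - mk (L ε - F ε (n+1)) + mk (L ε' - F ε' (n+1)) := by
        simp [map_add, map_sub]
      rw [h2]
      have hz : mk (L ε - L ε') = 0 := Ideal.Quotient.eq_zero_iff_mem.2 hd
      rw [hz, zero_sub]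
      refine Submodule.add_mem _ (Submodule.neg_mem _ ?_) ?_
      · rw [show mbar ^ (n+1) = (m ^ (n+1)).map mk by rw [Ideal.map_pow]]
        exact Ideal.mem_map_of_mem mk hA
      · rw [show mbar ^ (n+1) = (m ^ (n+1)).map mk by rw [Ideal.map_pow]]
        exact Ideal.mem_map_of_mem mk hA'
    have hgn : g ε n - g ε' n = t n ∨ g ε n - g ε' n = -(t n) := by
      rcases Bool.eq_false_or_eq_true (ε n) with h1 | h1 <;>
        rcases Bool.eq_false_or_eq_true (ε' n) with h2 | h2 <;>
        first
          | exact absurd (h1.trans h2.symm) hdiff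
          | (left; rw [hg]; simp [h1, h2]; done)
          | (right; rw [hg]; simp [h1, h2]; done)
    rcases hgn with h | h
    · rw [h, ht2 n] at key
      exact hxb2 n key
    · rw [h, map_neg, ht2 n] at key
      exact hxb2 n (by simpa using (mbar ^ (n+1)).neg_mem key)
  exact Function.Injective.countable hinj




variable {T : Type u} [CommRing T]

instance countable_poly (S : Subring T) [Countable ↥S] : Countable (Polynomial ↥S) := by
  have h1 : Countable (ℕ →₀ ↥S) := inferInstance
  haveI h2 : Countable (AddMonoidAlgebra ↥S ℕ) :=
    Function.Injective.countable (f := AddMonoidAlgebra.coeff)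
      (fun a b h => by cases a; cases b; cases h; rfl)
  exact Function.Injective.countable Polynomial.toFinsupp_injective

section Avoid

variable [IsNoetherianRing T] [IsLocalRing T] [IsAdicComplete (IsLocalRing.maximalIdeal T) T]

omit [IsNoetherianRing T] [IsAdicComplete (maximalIdeal T) T] in
theorem exists_nonmax_prime (hdim : 1 ≤ ringKrullDim T) :
    ∃ p : Ideal T, p.IsPrime ∧ p ≠ maximalIdeal T := by
  by_contra h
  push_neg at h
  have hsub : Subsingleton (PrimeSpectrum T) := by
    constructor
    intro a b
    exact PrimeSpectrum.ext ((h a.asIdeal a.isPrime).trans (h b.asIdeal b.isPrime).symm)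
  have h0 : ringKrullDim T ≤ 0 := Order.krullDim_nonpos_of_subsingleton
  have : (1 : WithBot (WithTop ℕ)) ≤ 0 := hdim.trans h0
  norm_num at this

theorem uncountable_T (hdim : 1 ≤ ringKrullDim T) : ¬ Countable T := by
  obtain ⟨p, hp, hpm⟩ := exists_nonmax_prime hdim
  haveI := hp
  intro h
  exact uncountable_quotient p hpm
    (Function.Surjective.countable Ideal.Quotient.mk_surjective)

theorem avoid (CF : Finset (Ideal T)) (hprime : ∀ p ∈ CF, p.IsPrime)
    (hnm : ∀ p ∈ CF, p ≠ maximalIdeal T)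
    (hinc : ∀ p ∈ CF, ∀ q ∈ CF, p ≠ q → ¬p ≤ q)
    (S : Subring T) (hS : Countable ↥S) (x₀ : T) (W : Ideal T) :
    ∃ w ∈ W, ∀ p ∈ CF, ¬W ≤ p →
      ∀ f : Polynomial ↥S, Polynomial.eval₂ S.subtype (x₀ + w) f ∈ p →
        ∀ j, (f.coeff j : T) ∈ p := by
  classical
  set G := CF.filter (fun p => ¬W ≤ p) with hG
  -- choose z
  have hz : ∀ p ∈ G, ∃ z : T, z ∈ W ∧ (∀ q ∈ G, q ≠ p → z ∈ q) ∧ z ∉ p := by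
    intro p hpG
    have hpC : p ∈ CF := (Finset.mem_filter.1 hpG).1
    have hWp : ¬W ≤ p := (Finset.mem_filter.1 hpG).2
    haveI hp : p.IsPrime := hprime p hpC
    have hprod : ¬(W * ∏ q ∈ G.erase p, q ≤ p) := by
      intro hle
      rcases hp.mul_le.1 hle with h | h
      · exact hWp h
      · obtain ⟨q, hq, hqle⟩ := (hp.prod_le).1 h
        have hqG := Finset.mem_of_mem_erase hq
        have hqC : q ∈ CF := (Finset.mem_filter.1 hqG).1
        exact hinc q hqC p hpC (Finset.ne_of_mem_erase hq) hqle
    obtain ⟨z, hz1, hz2⟩ := SetLike.not_le_iff_exists.1 hprod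
    refine ⟨z, ?_, ?_, hz2⟩
    · exact Ideal.mul_le_left hz1
    · intro q hq hqp
      have : W * ∏ r ∈ G.erase p, r ≤ q := by
        refine le_trans Ideal.mul_le_right (le_trans Ideal.prod_le_inf ?_)
        exact Finset.inf_le (Finset.mem_erase.2 ⟨hqp, hq⟩)
      exact this hz1
  choose z hzW hzin hznot using hz
  -- choose a
  have ha : ∀ p (hpG : p ∈ G), ∃ a : T,
      haveI : p.IsPrime := hprime p (Finset.mem_filter.1 hpG).1
      (Ideal.Quotient.mk p x₀ + Ideal.Quotient.mk p a * Ideal.Quotient.mk p (z p hpG)) ∉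
        {y : T ⧸ p | ∃ f : Polynomial ↥S,
          f.map ((Ideal.Quotient.mk p).comp S.subtype) ≠ 0 ∧
          (f.map ((Ideal.Quotient.mk p).comp S.subtype)).eval y = 0} := by
    intro p hpG
    have hpC : p ∈ CF := (Finset.mem_filter.1 hpG).1
    haveI hp : p.IsPrime := hprime p hpC
    set φ := (Ideal.Quotient.mk p).comp S.subtype with hφ
    set Alg := {y : T ⧸ p | ∃ f : Polynomial ↥S, f.map φ ≠ 0 ∧ (f.map φ).eval y = 0} with hAlg
    have hAlgC : Alg.Countable := by
      have : Alg ⊆ ⋃ f : Polynomial ↥S,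
          {y : T ⧸ p | f.map φ ≠ 0 ∧ (f.map φ).eval y = 0} := by
        rintro y ⟨f, hf1, hf2⟩
        exact Set.mem_iUnion.2 ⟨f, hf1, hf2⟩
      refine Set.Countable.mono this (Set.countable_iUnion (fun f => ?_))
      by_cases h : f.map φ = 0
      · convert Set.countable_empty
        ext y; simp [h]
      · refine Set.Countable.mono ?_ (Polynomial.finite_setOf_isRoot h).countable
        intro y hy
        exact hy.2
    -- affine preimage countable
    have hzne : Ideal.Quotient.mk p (z p hpG) ≠ 0 := fun hh =>
      hznot p hpG (Ideal.Quotient.eq_zero_iff_mem.1 hh)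
    have hinj : Function.Injective
        (fun a : T ⧸ p => Ideal.Quotient.mk p x₀ + a * Ideal.Quotient.mk p (z p hpG)) := by
      intro a b hab
      simp only [add_right_inj] at hab
      exact mul_right_cancel₀ hzne hab
    have hBad : Set.Countable ((fun a : T ⧸ p =>
        Ideal.Quotient.mk p x₀ + a * Ideal.Quotient.mk p (z p hpG)) ⁻¹' Alg) :=
      Set.Countable.preimage hAlgC hinj
    have huc : ¬ Countable (T ⧸ p) := uncountable_quotient p (hnm p hpC)
    by_contra hcon
    push_neg at hcon
    apply huc
    rw [← Set.countable_univ_iff]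
    refine Set.Countable.mono ?_ hBad
    intro y _
    obtain ⟨a, rfl⟩ := Ideal.Quotient.mk_surjective y
    exact hcon a
  choose a hanot using ha
  refine ⟨∑ p ∈ G.attach, a p.1 p.2 * z p.1 p.2, ?_, ?_⟩
  · exact Submodule.sum_mem _ (fun q _ => Ideal.mul_mem_left _ _ (hzW q.1 q.2))
  · intro p hpC hWp f hf j
    have hpG : p ∈ G := Finset.mem_filter.2 ⟨hpC, hWp⟩
    haveI hp : p.IsPrime := hprime p hpC
    set mkp := Ideal.Quotient.mk p with hmkp
    set φ := mkp.comp S.subtype with hφ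
    -- image of w
    have hw : mkp (∑ q ∈ G.attach, a q.1 q.2 * z q.1 q.2)
        = mkp (a p hpG) * mkp (z p hpG) := by
      rw [map_sum]
      rw [Finset.sum_eq_single_of_mem (⟨p, hpG⟩ : {x // x ∈ G}) (Finset.mem_attach _ _)]
      · rw [map_mul]
      · intro b _ hbne
        have hb : b.1 ≠ p := fun hh => hbne (Subtype.ext hh)
        have : z b.1 b.2 ∈ p := hzin b.1 b.2 p hpG hb.symm
        rw [map_mul, Ideal.Quotient.eq_zero_iff_mem.2 this, mul_zero]
    set x := x₀ + ∑ q ∈ G.attach, a q.1 q.2 * z q.1 q.2 with hx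
    have hxmk : mkp x = mkp x₀ + mkp (a p hpG) * mkp (z p hpG) := by
      rw [hx, map_add, hw]
    -- evaluate
    have heval : (f.map φ).eval (mkp x) = 0 := by
      rw [Polynomial.eval_map, ← Polynomial.hom_eval₂]
      exact Ideal.Quotient.eq_zero_iff_mem.2 hf
    have hfz : f.map φ = 0 := by
      by_contra hfne
      exact hanot p hpG ⟨f, hfne, by rw [← hxmk]; exact heval⟩
    have : φ (f.coeff j) = 0 := by
      have := Polynomial.coeff_map φ j (p := f)
      rw [hfz] at this
      simpa using this.symm
    exact Ideal.Quotient.eq_zero_iff_mem.1 this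

end Avoid

variable {T : Type u} [CommRing T] [IsLocalRing T]

lemma one_not_mem_max : (1 : T) ∉ maximalIdeal T := by
  intro h
  exact (maximalIdeal.isMaximal T).ne_top (Ideal.eq_top_of_isUnit_mem _ h isUnit_one)

lemma max_isPrime : (maximalIdeal T).IsPrime := (maximalIdeal.isMaximal T).isPrime

lemma prime_le_max {p : Ideal T} (hp : p.IsPrime) : p ≤ maximalIdeal T :=
  le_maximalIdeal hp.ne_top

variable {n : ℕ}

/-- same part of the partition -/
def simC (P : FeasiblePartition T n) (p p' : Ideal T) : Prop :=
  ∃ i, p ∈ P.part i ∧ p' ∈ P.part i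

lemma simC_symm {P : FeasiblePartition T n} {p p' : Ideal T} (h : simC P p p') : simC P p' p := by
  obtain ⟨i, h1, h2⟩ := h; exact ⟨i, h2, h1⟩

lemma simC_self {P : FeasiblePartition T n} {p : Ideal T} (hp : p ∈ P.C) : simC P p p := by
  obtain ⟨i, hi⟩ := P.part_cover p hp; exact ⟨i, hi, hi⟩

lemma simC_memC_left {P : FeasiblePartition T n} {p p' : Ideal T} (h : simC P p p') : p ∈ P.C := by
  obtain ⟨i, h1, _⟩ := h; exact P.part_subset i h1

lemma simC_memC_right {P : FeasiblePartition T n} {p p' : Ideal T} (h : simC P p p') : p' ∈ P.C := by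
  obtain ⟨i, _, h2⟩ := h; exact P.part_subset i h2

/-- the invariant preserved through the construction -/
structure Good (P : FeasiblePartition T n) (R : Subring T) (S : Subring T) : Prop where
  cnt : Countable ↥S
  rle : R ≤ S
  locl : ∀ t ∈ S, t ∉ maximalIdeal T → ∃ t', t' ∈ S ∧ t * t' = 1
  inter : ∀ p p' : Ideal T, simC P p p' → ∀ s ∈ S, s ∈ p → ∃ t, t ∉ p' ∧ t * s = 0

lemma Good.kker_mem {P : FeasiblePartition T n} {R S : Subring T} (hS : Good P R S)
    {p p' : Ideal T} (h : simC P p p') [p'.IsPrime] {s : T} (hsS : s ∈ S) (hsp : s ∈ p) :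
    s ∈ kker p' := hS.inter p p' h s hsS hsp

/-- adjoin an element and localize, within `T` -/
def locAdjoin (S : Subring T) (x : T) : Subring T where
  carrier := {t | ∃ f g : Polynomial ↥S, eval₂ S.subtype x g ∉ maximalIdeal T ∧
    t * eval₂ S.subtype x g = eval₂ S.subtype x f}
  one_mem' := ⟨1, 1, by simp [one_not_mem_max]⟩
  zero_mem' := ⟨0, 1, by simp [one_not_mem_max]⟩
  add_mem' := by
    rintro a b ⟨f1, g1, hg1, he1⟩ ⟨f2, g2, hg2, he2⟩
    refine ⟨f1 * g2 + f2 * g1, g1 * g2, ?_, ?_⟩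
    · rw [eval₂_mul]
      exact fun h => (max_isPrime.mem_or_mem h).elim hg1 hg2
    · rw [eval₂_mul, eval₂_add, eval₂_mul, eval₂_mul]
      calc (a + b) * (eval₂ S.subtype x g1 * eval₂ S.subtype x g2)
          = (a * eval₂ S.subtype x g1) * eval₂ S.subtype x g2
            + (b * eval₂ S.subtype x g2) * eval₂ S.subtype x g1 := by ring
      _ = _ := by rw [he1, he2]
  neg_mem' := by
    rintro a ⟨f, g, hg, he⟩
    exact ⟨-f, g, hg, by rw [eval₂_neg, ← he]; ring⟩
  mul_mem' := by
    rintro a b ⟨f1, g1, hg1, he1⟩ ⟨f2, g2, hg2, he2⟩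
    refine ⟨f1 * f2, g1 * g2, ?_, ?_⟩
    · rw [eval₂_mul]
      exact fun h => (max_isPrime.mem_or_mem h).elim hg1 hg2
    · rw [eval₂_mul, eval₂_mul]
      calc a * b * (eval₂ S.subtype x g1 * eval₂ S.subtype x g2)
          = (a * eval₂ S.subtype x g1) * (b * eval₂ S.subtype x g2) := by ring
      _ = _ := by rw [he1, he2]

lemma le_locAdjoin (S : Subring T) (x : T) : S ≤ locAdjoin S x := by
  intro s hs
  exact ⟨Polynomial.C ⟨s, hs⟩, 1, by simp [one_not_mem_max]⟩

lemma mem_locAdjoin_self (S : Subring T) (x : T) : x ∈ locAdjoin S x :=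
  ⟨Polynomial.X, 1, by simp [one_not_mem_max]⟩

lemma locAdjoin_countable (S : Subring T) [Countable ↥S] (x : T) :
    Countable ↥(locAdjoin S x) := by
  have hsub : (locAdjoin S x : Set T) ⊆ Set.range (fun fg : Polynomial ↥S × Polynomial ↥S =>
      eval₂ S.subtype x fg.1 * Ring.inverse (eval₂ S.subtype x fg.2)) := by
    rintro t ⟨f, g, hg, he⟩
    refine ⟨(f, g), ?_⟩
    have hu : IsUnit (eval₂ S.subtype x g) := by
      by_contra h
      exact hg ((mem_maximalIdeal _).2 h)
    simp only
    rw [← he, mul_assoc, Ring.mul_inverse_cancel _ hu, mul_one]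
  exact Set.Countable.to_subtype (Set.Countable.mono hsub (Set.countable_range _))

variable {P : FeasiblePartition T n} {R : Subring T}

/-- the per-prime condition an adjoined element must satisfy -/
def OKat (P : FeasiblePartition T n) (S : Subring T) (p : Ideal T) (x : T) : Prop :=
  ∀ f : Polynomial ↥S, eval₂ S.subtype x f ∈ p →
    ∀ p' : Ideal T, simC P p p' → ∃ t, t ∉ p' ∧ t * eval₂ S.subtype x f = 0

theorem good_locAdjoin (hS : Good P R S) (x : T) (hOK : ∀ p ∈ P.C, OKat P S p x) :
    Good P R (locAdjoin S x) := by
  haveI := hS.cnt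
  refine ⟨locAdjoin_countable S x, le_trans hS.rle (le_locAdjoin S x), ?_, ?_⟩
  · rintro t ⟨f, g, hg, he⟩ htm
    have hfm : eval₂ S.subtype x f ∉ maximalIdeal T := by
      rw [← he]
      exact fun h => (max_isPrime.mem_or_mem h).elim htm hg
    have hu : IsUnit (eval₂ S.subtype x f) := by
      by_contra h; exact hfm ((mem_maximalIdeal _).2 h)
    obtain ⟨v, hv⟩ := hu.exists_right_inv
    refine ⟨eval₂ S.subtype x g * v, ?_, ?_⟩
    · refine Subring.mul_mem _ ⟨g, 1, by simp [one_not_mem_max]⟩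
        (⟨1, f, hfm, ?_⟩ : v ∈ locAdjoin S x)
      rw [eval₂_one, mul_comm]
      exact hv
    · calc t * (eval₂ S.subtype x g * v) = (t * eval₂ S.subtype x g) * v := by ring
      _ = eval₂ S.subtype x f * v := by rw [he]
      _ = 1 := hv
  · rintro p p' hsim s ⟨f, g, hg, he⟩ hsp
    have hpC : p ∈ P.C := simC_memC_left hsim
    haveI hp' : p'.IsPrime := P.primes p' (simC_memC_right hsim)
    have hfp : eval₂ S.subtype x f ∈ p := by
      rw [← he]
      exact Ideal.mul_mem_right _ _ hsp
    obtain ⟨t, htp, ht0⟩ := hOK p hpC f hfp p' hsim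
    have hgp' : eval₂ S.subtype x g ∉ p' := fun h => hg (prime_le_max hp' h)
    refine ⟨t * eval₂ S.subtype x g, fun h => (hp'.mem_or_mem h).elim htp hgp', ?_⟩
    calc t * eval₂ S.subtype x g * s = t * (s * eval₂ S.subtype x g) := by ring
    _ = 0 := by rw [he, ht0]

theorem okat_of_trans (hS : Good P R S) {p : Ideal T} (hpC : p ∈ P.C) {x : T}
    (htr : ∀ f : Polynomial ↥S, eval₂ S.subtype x f ∈ p → ∀ j, (f.coeff j : T) ∈ p) :
    OKat P S p x := by
  intro f hf p' hsim
  haveI hp' : p'.IsPrime := P.primes p' (simC_memC_right hsim)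
  have hmem : eval₂ S.subtype x f ∈ kker p' := by
    rw [eval₂_eq_sum_range]
    refine Submodule.sum_mem _ (fun i _ => ?_)
    have hcf : (f.coeff i : T) ∈ kker p' :=
      hS.kker_mem hsim (f.coeff i).2 (htr f hf i)
    exact Ideal.mul_mem_right _ _ hcf
  exact hmem

theorem okat_of_rel (hS : Good P R S) {p : Ideal T} (hpC : p ∈ P.C) {x y c₀ : T}
    (hy : y ∈ S) (hc : c₀ ∈ S)
    (hynot : ∀ p' : Ideal T, simC P p p' → y ∉ p')
    (hδ : ∀ p' : Ideal T, simC P p p' → ∀ hp' : p'.IsPrime, x * y - c₀ ∈ kker p') :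
    OKat P S p x := by
  intro f hf p' hsim
  haveI hp : p.IsPrime := P.primes p hpC
  haveI hp' : p'.IsPrime := P.primes p' (simC_memC_right hsim)
  set d := f.natDegree with hd
  set e : T := ∑ i ∈ Finset.range (d + 1), (f.coeff i : T) * (c₀ ^ i * y ^ (d - i)) with he
  have hkey : y ^ d * eval₂ S.subtype x f - e ∈ Ideal.span {x * y - c₀} := by
    rw [eval₂_eq_sum_range, he, Finset.mul_sum, ← Finset.sum_sub_distrib]
    simp only [Subring.coe_subtype]
    refine Submodule.sum_mem _ (fun i hi => ?_)
    have hi' : i ≤ d := Nat.lt_succ_iff.1 (Finset.mem_range.1 hi)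
    have hpow : y ^ d = y ^ (d - i) * y ^ i := by
      rw [← pow_add, Nat.sub_add_cancel hi']
    have hterm : y ^ d * ((f.coeff i : T) * x ^ i) - (f.coeff i : T) * (c₀ ^ i * y ^ (d - i))
        = ((f.coeff i : T) * y ^ (d - i)) * ((x * y) ^ i - c₀ ^ i) := by
      rw [hpow, mul_pow]; ring
    rw [hterm]
    obtain ⟨q, hq⟩ := sub_dvd_pow_sub_pow (x * y) c₀ i
    rw [hq]
    exact Ideal.mul_mem_left _ _ (Ideal.mul_mem_right _ _
      (Ideal.subset_span (Set.mem_singleton _)))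
  have hspan : ∀ p'' : Ideal T, simC P p p'' → ∀ hp'' : p''.IsPrime,
      Ideal.span {x * y - c₀} ≤ kker p'' := by
    intro p'' hsim'' hp''
    rw [Ideal.span_le, Set.singleton_subset_iff]
    exact hδ p'' hsim'' hp''
  have hep : e ∈ p := by
    have h1 : y ^ d * eval₂ S.subtype x f ∈ p := Ideal.mul_mem_left _ _ hf
    have h2 : y ^ d * eval₂ S.subtype x f - e ∈ p :=
      kker_le_self (hspan p (simC_self hpC) hp hkey)
    have := Ideal.sub_mem p h1 h2
    simpa using this
  have heS : e ∈ S := by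
    rw [he]
    refine Subring.sum_mem _ (fun i _ => ?_)
    exact Subring.mul_mem _ (f.coeff i).2
      (Subring.mul_mem _ (Subring.pow_mem _ hc i) (Subring.pow_mem _ hy _))
  have hek : e ∈ kker p' := hS.kker_mem hsim heS hep
  have hyd : y ^ d * eval₂ S.subtype x f ∈ kker p' := by
    have h2 : y ^ d * eval₂ S.subtype x f - e ∈ kker p' := hspan p' hsim hp' hkey
    have := Submodule.add_mem _ h2 hek
    simpa using this
  have : eval₂ S.subtype x f ∈ kker p' := kker_cancel_pow (hynot p' hsim) d hyd
  exact this

def annI (y : T) : Ideal T where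
  carrier := {r | r * y = 0}
  add_mem' := by
    intro a b ha hb
    simp only [Set.mem_setOf_eq] at *
    rw [add_mul, ha, hb, add_zero]
  zero_mem' := by simp
  smul_mem' := by
    intro c a ha
    simp only [Set.mem_setOf_eq, smul_eq_mul] at *
    rw [mul_assoc, ha, mul_zero]

lemma mem_annI {y r : T} : r ∈ annI y ↔ r * y = 0 := Iff.rfl

variable {P : FeasiblePartition T n} {R : Subring T}

theorem good_R (hR : IsCIPSubring P R) : Good P R R := by
  obtain ⟨⟨⟨hloc, hmax⟩, hinf, h2, h3, h4⟩, hcnt⟩ := hR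
  refine ⟨hcnt, le_rfl, ?_, ?_⟩
  · intro t ht htm
    have hnm : (⟨t, ht⟩ : ↥R) ∉ IsLocalRing.maximalIdeal ↥R := by
      rw [hmax]
      exact htm
    have hu : IsUnit (⟨t, ht⟩ : ↥R) := by
      by_contra h
      exact hnm ((mem_maximalIdeal _).2 h)
    obtain ⟨b, hb⟩ := hu.exists_right_inv
    refine ⟨(b : T), b.2, ?_⟩
    have := congrArg (fun z : ↥R => (z : T)) hb
    simpa using this
  · intro p p' hsim s hsR hsp
    have hpC := simC_memC_left hsim
    have hp'C := simC_memC_right hsim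
    have hcomap : p.comap R.subtype = p'.comap R.subtype :=
      (h3 p hpC p' hp'C).1 hsim
    have hsp' : s ∈ p' := by
      have h1 : (⟨s, hsR⟩ : ↥R) ∈ p.comap R.subtype := hsp
      rw [hcomap] at h1
      exact h1
    obtain ⟨t, ht0, htp⟩ := h4 p' hp'C s hsR hsp'
    exact ⟨t, htp, ht0⟩

variable [IsNoetherianRing T] [IsAdicComplete (IsLocalRing.maximalIdeal T) T]

theorem exists_good_coset {S : Subring T} (hS : Good P R S) (x₀ : T) (W : Ideal T) :
    ∃ w ∈ W, ∀ p ∈ P.C, ¬W ≤ p →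
      ∀ f : Polynomial ↥S, eval₂ S.subtype (x₀ + w) f ∈ p → ∀ j, (f.coeff j : T) ∈ p := by
  haveI := hS.cnt
  have h := avoid P.finite.toFinset
    (fun p hp => P.primes p (P.finite.mem_toFinset.1 hp))
    (fun p hp => P.nonmaximal p (P.finite.mem_toFinset.1 hp))
    (fun p hp q hq hne => P.incomparable p (P.finite.mem_toFinset.1 hp) q
      (P.finite.mem_toFinset.1 hq) hne)
    S hS.cnt x₀ W
  obtain ⟨w, hw1, hw2⟩ := h
  exact ⟨w, hw1, fun p hpC => hw2 p (P.finite.mem_toFinset.2 hpC)⟩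

theorem task : ∀ (k : ℕ) (S : Subring T), Good P R S → ∀ (y t : Fin k → T),
    (∀ i, y i ∈ S) → (∑ i, t i * y i) ∈ S →
    ∃ S' : Subring T, Good P R S' ∧ S ≤ S' ∧ ∃ a : Fin k → T, (∀ i, a i ∈ S') ∧
      ∑ i, a i * y i = ∑ i, t i * y i := by
  intro k
  induction k with
  | zero =>
    intro S hS y t _ _
    exact ⟨S, hS, le_rfl, fun i => i.elim0, fun i => i.elim0, rfl⟩
  | succ k ih =>
    intro S hS y t hyS hcS
    set c : T := ∑ i, t i * y i with hc
    set y₀ : T := y (Fin.last k) with hy₀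
    set V : Ideal T := Ideal.span (Set.range (y ∘ Fin.castSucc)) ⊔ annI y₀ with hV
    obtain ⟨w, hwV, hwtrans⟩ := exists_good_coset hS (t (Fin.last k)) V
    set x : T := t (Fin.last k) + w with hx
    have hsum : c = (∑ i : Fin k, t (Fin.castSucc i) * y (Fin.castSucc i))
        + t (Fin.last k) * y₀ := by
      rw [hc, Fin.sum_univ_castSucc]
    obtain ⟨v, hv, α, hα, hw⟩ := Submodule.mem_sup.1 hwV
    have hαy : α * y₀ = 0 := hα
    have hid : x * y₀ - c = v * y₀
        - ∑ i : Fin k, t (Fin.castSucc i) * y (Fin.castSucc i) := by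
      rw [hx, hsum, ← hw]
      have hexp : (t (Fin.last k) + (v + α)) * y₀
          = t (Fin.last k) * y₀ + v * y₀ + α * y₀ := by ring
      rw [hexp, hαy]
      ring
    have hspan_le : ∀ p p' : Ideal T, V ≤ p → simC P p p' → ∀ hp'' : p'.IsPrime,
        Ideal.span (Set.range (y ∘ Fin.castSucc)) ≤ kker p' := by
      intro p p' hVp hsim hp''
      rw [Ideal.span_le]
      rintro b ⟨i, rfl⟩
      have hbp : (y ∘ Fin.castSucc) i ∈ p :=
        hVp ((le_sup_left : _ ≤ V) (Ideal.subset_span ⟨i, rfl⟩))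
      exact hS.kker_mem hsim (hyS _) hbp
    have hOK : ∀ p ∈ P.C, OKat P S p x := by
      intro p hpC
      by_cases hVp : V ≤ p
      · refine okat_of_rel hS hpC (y := y₀) (c₀ := c) (hyS _) hcS ?_ ?_
        · intro p' hsim hyp'
          obtain ⟨tt, http, htt0⟩ := hS.inter p' p (simC_symm hsim) y₀ (hyS _) hyp'
          exact http (hVp ((le_sup_right : _ ≤ V) (mem_annI.2 htt0)))
        · intro p' hsim hp'
          have hsle := hspan_le p p' hVp hsim hp'
          rw [hid]
          refine Submodule.sub_mem _ ?_ ?_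
          · exact hsle (Ideal.mul_mem_right _ _ hv)
          · refine hsle (Submodule.sum_mem _ (fun i _ => ?_))
            exact Ideal.mul_mem_left _ _ (Ideal.subset_span ⟨i, rfl⟩)
      · exact okat_of_trans hS hpC (hwtrans p hpC hVp)
    set S₁ : Subring T := locAdjoin S x with hS₁
    have hG1 : Good P R S₁ := good_locAdjoin hS x hOK
    have hle1 : S ≤ S₁ := le_locAdjoin S x
    have hxS₁ : x ∈ S₁ := mem_locAdjoin_self S x
    obtain ⟨dc, hdc⟩ := (Submodule.mem_span_range_iff_exists_fun T).1 hv
    set t' : Fin k → T := fun i => t (Fin.castSucc i) - dc i * y₀ with ht'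
    have hkey : ∑ i, t' i * y (Fin.castSucc i) = c - x * y₀ := by
      have h1 : c - x * y₀ = (∑ i : Fin k, t (Fin.castSucc i) * y (Fin.castSucc i))
          - v * y₀ := by
        have := hid
        have h2 : c - x * y₀ = -(x * y₀ - c) := by ring
        rw [h2, hid]
        ring
      rw [h1, ← hdc, Finset.sum_mul, ← Finset.sum_sub_distrib]
      refine Finset.sum_congr rfl (fun i _ => ?_)
      simp only [ht', smul_eq_mul, Function.comp_apply]
      ring
    have hc'S₁ : (∑ i, t' i * y (Fin.castSucc i)) ∈ S₁ := by
      rw [hkey]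
      exact Subring.sub_mem _ (hle1 hcS) (Subring.mul_mem _ hxS₁ (hle1 (hyS _)))
    obtain ⟨S'', hG'', hle'', a', ha'mem, ha'eq⟩ :=
      ih S₁ hG1 (fun i => y (Fin.castSucc i)) t' (fun i => hle1 (hyS _)) hc'S₁
    refine ⟨S'', hG'', le_trans hle1 hle'', Fin.snoc a' x, ?_, ?_⟩
    · intro i
      refine Fin.lastCases ?_ (fun j => ?_) i
      · rw [Fin.snoc_last]
        exact hle'' hxS₁
      · rw [Fin.snoc_castSucc]
        exact ha'mem j
    · rw [Fin.sum_univ_castSucc]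
      simp only [Fin.snoc_castSucc, Fin.snoc_last]
      rw [ha'eq, hkey]
      ring

theorem good_iSup (U : ℕ → Subring T) (hmono : Monotone U) (hg : ∀ m, Good P R (U m)) :
    Good P R (⨆ m, U m) := by
  have hdir : Directed (· ≤ ·) U := hmono.directed_le
  refine ⟨?_, le_trans (hg 0).rle (le_iSup U 0), ?_, ?_⟩
  · have h1 : ((⨆ m, U m : Subring T) : Set T).Countable := by
      rw [Subring.coe_iSup_of_directed hdir]
      exact Set.countable_iUnion (fun m => Set.countable_coe_iff.mpr (hg m).cnt)
    exact h1.to_subtype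
  · intro t ht htm
    rw [Subring.mem_iSup_of_directed hdir] at ht
    obtain ⟨m, hm⟩ := ht
    obtain ⟨t', ht', he⟩ := (hg m).locl t hm htm
    exact ⟨t', (le_iSup U m : U m ≤ _) ht', he⟩
  · intro p p' hsim s hs hsp
    rw [Subring.mem_iSup_of_directed hdir] at hs
    obtain ⟨m, hm⟩ := hs
    exact (hg m).inter p p' hsim s hm hsp

theorem close_tasks {S : Subring T} (hS : Good P R S) :
    ∃ S' : Subring T, Good P R S' ∧ S ≤ S' ∧
      ∀ (k : ℕ) (y : Fin k → T) (c : T), (∀ i, y i ∈ S) → c ∈ S →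
        c ∈ Ideal.span (Set.range y) →
        ∃ a : Fin k → T, (∀ i, a i ∈ S') ∧ c = ∑ i, a i * y i := by
  classical
  haveI := hS.cnt
  -- the countable type of tasks
  have hstep : ∀ V : Subring T, Good P R V → S ≤ V →
      ∀ τ : Σ k : ℕ, (Fin k → ↥S) × ↥S,
      ∃ V' : Subring T, Good P R V' ∧ S ≤ V' ∧ V ≤ V' ∧
        ((τ.2.2 : T) ∈ Ideal.span (Set.range fun i => ((τ.2.1 i : T))) →
          ∃ a : Fin τ.1 → T, (∀ i, a i ∈ V') ∧ (τ.2.2 : T) = ∑ i, a i * (τ.2.1 i : T)) := by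
    intro V hV hSV τ
    by_cases hmem : (τ.2.2 : T) ∈ Ideal.span (Set.range fun i => ((τ.2.1 i : T)))
    · obtain ⟨tf, htf⟩ := (Submodule.mem_span_range_iff_exists_fun T).1 hmem
      have hsum : (∑ i, tf i * (τ.2.1 i : T)) ∈ V := by
        have : ∑ i, tf i * (τ.2.1 i : T) = (τ.2.2 : T) := by
          rw [← htf]
          simp [smul_eq_mul]
        rw [this]
        exact hSV τ.2.2.2
      obtain ⟨V', hV', hVV', a, haV', haeq⟩ :=
        task τ.1 V hV (fun i => (τ.2.1 i : T)) tf (fun i => hSV (τ.2.1 i).2) hsum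
      refine ⟨V', hV', le_trans hSV hVV', hVV', fun _ => ⟨a, haV', ?_⟩⟩
      have h5 : (τ.2.2 : T) = ∑ i, tf i * (τ.2.1 i : T) := by
        rw [← htf]
        simp [smul_eq_mul]
      rw [h5]
      exact haeq.symm
    · exact ⟨V, hV, hSV, le_rfl, fun h => absurd h hmem⟩
  choose next hnext using hstep
  haveI : Nonempty (Σ k : ℕ, (Fin k → ↥S) × ↥S) := ⟨⟨0, fun i => i.elim0, 0⟩⟩
  obtain ⟨f, hf⟩ := exists_surjective_nat (Σ k : ℕ, (Fin k → ↥S) × ↥S)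
  set u : ℕ → {V : Subring T // Good P R V ∧ S ≤ V} :=
    fun m => Nat.rec ⟨S, hS, le_rfl⟩
      (fun m Vp => ⟨next Vp.1 Vp.2.1 Vp.2.2 (f m),
        (hnext Vp.1 Vp.2.1 Vp.2.2 (f m)).1, (hnext Vp.1 Vp.2.1 Vp.2.2 (f m)).2.1⟩) m
    with hu
  have husucc : ∀ m : ℕ, (u (m+1)).1 = next (u m).1 (u m).2.1 (u m).2.2 (f m) := fun m => rfl
  have humono : Monotone (fun m => (u m).1) := by
    refine monotone_nat_of_le_succ (fun m => ?_)
    rw [husucc m]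
    exact (hnext (u m).1 (u m).2.1 (u m).2.2 (f m)).2.2.1
  refine ⟨⨆ m, (u m).1, good_iSup _ humono (fun m => (u m).2.1), le_trans (u 0).2.2
    (le_iSup (fun m => (u m).1) 0), ?_⟩
  intro k y c hy hc hcspan
  obtain ⟨m, hm⟩ := hf ⟨k, fun i => ⟨y i, hy i⟩, ⟨c, hc⟩⟩
  have h4 := (hnext (u m).1 (u m).2.1 (u m).2.2 (f m)).2.2.2
  rw [hm] at h4
  dsimp only at h4
  obtain ⟨a, haV, haeq⟩ := h4 hcspan
  refine ⟨a, fun i => ?_, haeq⟩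
  have : a i ∈ (u (m+1)).1 := by
    rw [husucc m, hm]
    exact haV i
  exact (le_iSup (fun m => (u m).1) (m+1) : _ ≤ _) this

theorem ideal_closure {S : Subring T} (hS : Good P R S) :
    ∃ S' : Subring T, Good P R S' ∧ S ≤ S' ∧
      ∀ (k : ℕ) (y : Fin k → T) (c : T), (∀ i, y i ∈ S') → c ∈ S' →
        c ∈ Ideal.span (Set.range y) →
        ∃ a : Fin k → T, (∀ i, a i ∈ S') ∧ c = ∑ i, a i * y i := by
  classical
  have hstep : ∀ V : Subring T, Good P R V →
      ∃ V' : Subring T, Good P R V' ∧ V ≤ V' ∧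
        ∀ (k : ℕ) (y : Fin k → T) (c : T), (∀ i, y i ∈ V) → c ∈ V →
          c ∈ Ideal.span (Set.range y) →
          ∃ a : Fin k → T, (∀ i, a i ∈ V') ∧ c = ∑ i, a i * y i :=
    fun V hV => close_tasks hV
  choose next hnext using hstep
  set W : ℕ → {V : Subring T // Good P R V} :=
    fun m => Nat.rec ⟨S, hS⟩ (fun m Vp => ⟨next Vp.1 Vp.2, (hnext Vp.1 Vp.2).1⟩) m with hW
  have hWsucc : ∀ m : ℕ, (W (m+1)).1 = next (W m).1 (W m).2 := fun m => rfl
  have hWmono : Monotone (fun m => (W m).1) := by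
    refine monotone_nat_of_le_succ (fun m => ?_)
    rw [hWsucc m]
    exact (hnext (W m).1 (W m).2).2.1
  refine ⟨⨆ m, (W m).1, good_iSup _ hWmono (fun m => (W m).2),
    le_iSup (fun m => (W m).1) 0, ?_⟩
  intro k y c hy hc hcspan
  have hdir : Directed (· ≤ ·) (fun m => (W m).1) := hWmono.directed_le
  -- find a common stage
  have hex : ∀ i : Fin k, ∃ m, y i ∈ (W m).1 := by
    intro i
    have := hy i
    rwa [Subring.mem_iSup_of_directed hdir] at this
  choose g hg using hex
  obtain ⟨mc, hmc⟩ := (Subring.mem_iSup_of_directed hdir).1 hc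
  set N : ℕ := max (Finset.univ.sup g) mc with hN
  have hyN : ∀ i, y i ∈ (W N).1 := by
    intro i
    refine hWmono ?_ (hg i)
    exact le_max_of_le_left (Finset.le_sup (Finset.mem_univ i))
  have hcN : c ∈ (W N).1 := hWmono (le_max_right _ _) hmc
  obtain ⟨a, haW, haeq⟩ := (hnext (W N).1 (W N).2).2.2 k y c hyN hcN hcspan
  refine ⟨a, fun i => ?_, haeq⟩
  have : a i ∈ (W (N+1)).1 := by
    rw [hWsucc N]
    exact haW i
  exact (le_iSup (fun m => (W m).1) (N+1) : _ ≤ _) this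

theorem cip_of_good {S : Subring T} (hR : IsCIPSubring P R) (hS : Good P R S) :
    IsCIPSubring P S := by
  obtain ⟨⟨hql, hinf, h2, h3, h4⟩, hcnt⟩ := hR
  haveI hScnt := hS.cnt
  haveI : Nontrivial ↥S :=
    ⟨⟨0, 1, fun h => zero_ne_one (α := T) (congrArg (fun z : ↥S => (z : T)) h)⟩⟩
  have hunit : ∀ a : ↥S, (a : T) ∉ maximalIdeal T → IsUnit a := by
    intro a ha
    obtain ⟨t', ht'S, ht'⟩ := hS.locl a a.2 ha
    exact isUnit_iff_exists_inv.2 ⟨⟨t', ht'S⟩, Subtype.ext ht'⟩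
  have hunit' : ∀ a : ↥S, IsUnit a → (a : T) ∉ maximalIdeal T := by
    intro a ha hmem
    obtain ⟨b, hb⟩ := isUnit_iff_exists_inv.1 ha
    have hco : (a : T) * (b : T) = 1 := by
      have := congrArg (fun z : ↥S => (z : T)) hb
      simpa using this
    exact one_not_mem_max (hco ▸ Ideal.mul_mem_right _ _ hmem)
  haveI hloc : IsLocalRing ↥S := by
    refine IsLocalRing.of_nonunits_add ?_
    intro a b ha hb
    rw [mem_nonunits_iff] at ha hb ⊢
    intro hu
    have haM : (a : T) ∈ maximalIdeal T := by
      by_contra h; exact ha (hunit a h)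
    have hbM : (b : T) ∈ maximalIdeal T := by
      by_contra h; exact hb (hunit b h)
    exact hunit' _ hu (Submodule.add_mem _ haM hbM)
  have hmaxeq : IsLocalRing.maximalIdeal ↥S = (maximalIdeal T).comap S.subtype := by
    ext a
    rw [IsLocalRing.mem_maximalIdeal, mem_nonunits_iff, Ideal.mem_comap]
    constructor
    · intro h
      by_contra hm
      exact h (hunit a hm)
    · intro h hu
      exact hunit' a hu h
  haveI hinfR : Infinite ↥R := hinf
  have hinfS : Infinite ↥S := Infinite.of_injective
    (fun b : ↥R => (⟨(b : T), hS.rle b.2⟩ : ↥S))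
    (fun b b' h => Subtype.ext (congrArg (fun z : ↥S => (z : T)) h))
  refine ⟨⟨⟨hloc, hmaxeq⟩, hinfS, ?_, ?_, ?_⟩, hScnt⟩
  · -- condition 2
    intro p hpC q hq hqp
    haveI hpP : p.IsPrime := P.primes p hpC
    haveI hqP : q.IsPrime := hq.1.1
    ext a
    simp only [Ideal.mem_comap]
    constructor
    · intro hap
      obtain ⟨t, htp, ht0⟩ := hS.inter p p (simC_self hpC) _ a.2 hap
      exact kker_le_of_le hqp (⟨t, htp, ht0⟩ : (a : T) ∈ kker p)
    · intro haq
      exact hqp haq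
  · -- condition 3
    intro p hpC p' hp'C
    constructor
    · intro hsim
      haveI hpP : p.IsPrime := P.primes p hpC
      haveI hp'P : p'.IsPrime := P.primes p' hp'C
      ext a
      simp only [Ideal.mem_comap]
      constructor
      · intro h
        exact kker_le_self (hS.kker_mem (hsim : simC P p p') a.2 h)
      · intro h
        exact kker_le_self (hS.kker_mem (simC_symm (hsim : simC P p p')) a.2 h)
    · intro hcomap
      have hcomapR : p.comap R.subtype = p'.comap R.subtype := by
        ext b
        simp only [Ideal.mem_comap]
        have hb : (b : T) ∈ S := hS.rle b.2
        constructor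
        · intro h
          have h2 : (⟨(b : T), hb⟩ : ↥S) ∈ p.comap S.subtype := h
          rw [hcomap] at h2
          exact h2
        · intro h
          have h2 : (⟨(b : T), hb⟩ : ↥S) ∈ p'.comap S.subtype := h
          rw [← hcomap] at h2
          exact h2
      exact (h3 p hpC p' hp'C).2 hcomapR
  · -- condition 4
    intro p hpC r hrS hrp
    obtain ⟨t, htp, ht0⟩ := hS.inter p p (simC_self hpC) r hrS hrp
    exact ⟨t, ht0, htp⟩

end St6


/-- Let `(T, m)` be a complete local ring with `dim T ≥ 1`, `P` a
feasible partition, `J` an ideal of `T` not contained in any `p ∈ C`, and `u + J ∈ T/J`.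
If `R` is a CIP-subring of `T`, there is a CIP-subring `S` of `T` with `R ⊆ S ⊂ T`,
`u + J` in the image of `S → T/J`, and `IT ∩ S = I` for every finitely generated ideal
`I` of `S`. -/
theorem statement_6 (T : Type u) [CommRing T] [IsNoetherianRing T] [IsLocalRing T]
    [IsAdicComplete (IsLocalRing.maximalIdeal T) T]
    (hdim : 1 ≤ ringKrullDim T) {n : ℕ} (P : FeasiblePartition T n)
    (J : Ideal T) (hJ : ∀ p ∈ P.C, ¬J ≤ p) (u : T)
    (R : Subring T) (hR : IsCIPSubring P R) :
    ∃ S : Subring T, IsCIPSubring P S ∧ R ≤ S ∧ S ≠ ⊤ ∧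
      (∃ s : T, s ∈ S ∧ s - u ∈ J) ∧
      ∀ I : Ideal ↥S, I.FG → (I.map S.subtype).comap S.subtype = I := by
  classical
  have hG0 : St6.Good P R R := St6.good_R hR
  obtain ⟨w, hwJ, htr⟩ := St6.exists_good_coset hG0 u J
  have hOK : ∀ p ∈ P.C, St6.OKat P R p (u + w) := fun p hpC =>
    St6.okat_of_trans hG0 hpC (htr p hpC (hJ p hpC))
  have hG1 : St6.Good P R (St6.locAdjoin R (u + w)) := St6.good_locAdjoin hG0 _ hOK
  obtain ⟨S', hG', hle', hclose⟩ := St6.ideal_closure hG1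
  refine ⟨S', St6.cip_of_good hR hG', le_trans (St6.le_locAdjoin _ _) hle', ?_, ?_, ?_⟩
  · -- S' ≠ ⊤
    intro htop
    apply St6.uncountable_T hdim
    haveI h1 : Countable ↥(⊤ : Subring T) := htop ▸ hG'.cnt
    exact Countable.of_equiv ↥(⊤ : Subring T) Subring.topEquiv.toEquiv
  · exact ⟨u + w, hle' (St6.mem_locAdjoin_self _ _), by simpa using hwJ⟩
  · intro I hI
    obtain ⟨s0, hs0⟩ := hI
    refine le_antisymm ?_ Ideal.le_comap_map
    intro ξ hξ
    rw [Ideal.mem_comap] at hξ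
    have hmap : I.map S'.subtype = Ideal.span (S'.subtype '' ↑s0) := by
      rw [← hs0, Ideal.map_span]
    rw [hmap] at hξ
    set l := s0.toList with hl
    set k := l.length with hk
    set y : Fin k → T := fun i => ((l.get i : ↥S') : T) with hy
    have himg : S'.subtype '' ↑s0 = Set.range y := by
      ext b
      simp only [Set.mem_image, Set.mem_range]
      constructor
      · rintro ⟨b', hb', rfl⟩
        have hbl : b' ∈ l := (Finset.mem_toList).2 hb'
        obtain ⟨i, hi⟩ := List.get_of_mem hbl
        exact ⟨i, congrArg (fun z : ↥S' => (z : T)) hi⟩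
      · rintro ⟨i, rfl⟩
        exact ⟨l.get i, Finset.mem_toList.1 (l.get_mem _), rfl⟩
    rw [himg] at hξ
    obtain ⟨a, haS, haeq⟩ := hclose k y (S'.subtype ξ) (fun i => (l.get i).2) ξ.2 hξ
    have hcoe : (S'.subtype (∑ i, (⟨a i, haS i⟩ : ↥S') * l.get i)) = ∑ i, a i * y i := by
      rw [map_sum]
      refine Finset.sum_congr rfl (fun i _ => ?_)
      rw [map_mul]
      rfl
    have hxi : ξ = ∑ i, (⟨a i, haS i⟩ : ↥S') * l.get i := by
      apply Subtype.ext
      exact haeq.trans hcoe.symm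
    rw [← hs0, hxi]
    exact Ideal.sum_mem _ (fun i _ => Ideal.mul_mem_left _ _
      (Ideal.subset_span (Finset.mem_toList.1 (l.get_mem _))))
end

section
/- Let (T, m) be a complete local (Noetherian) ring with dim T ≥ 1 and let P = {C_1, …, C_n} be a partition of Min(T) such that whenever p ∈ C_i is a singular minimal prime, C_i = {p}. If (R_i)_{i ∈ Z^+} is a countable chain R_1 ⊆ R_2 ⊆ ⋯ of CGIP-subrings of T, then R := ∪_{i ∈ Z^+} R_i is a CGIP-subring of T. -/
/-! Common definitions: regular/singular primes, catenary and universally catenary rings,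
excellent local rings, quasi-local subrings, completions of subrings, the invariants
`d₁(T)` and `d₂(T)`, feasible partitions and (C)IP-subrings, partitions of `Min(T)` and
(C)GIP-subrings, and witnesses for "T is the completion of a countable (excellent) local
ring". -/

universe u v

/-- Let `(T, m)` be a complete local ring with `dim T ≥ 1` and `P` a
partition of `Min(T)` in which singular minimal primes are alone in their class. The
union of a countable chain of CGIP-subrings of `T` is a CGIP-subring of `T`. -/
theorem statement_14 (T : Type u) [CommRing T] [IsNoetherianRing T] [IsLocalRing T]
    [IsAdicComplete (IsLocalRing.maximalIdeal T) T]
    (hdim : 1 ≤ ringKrullDim T) {n : ℕ} (P : MinPartition T n)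
    (R : ℕ → Subring T) (hchain : ∀ i, R i ≤ R (i + 1))
    (hCGIP : ∀ i, IsCGIPSubring P (R i)) :
    IsCGIPSubring P (⨆ i, R i) := by
  have hmono : Monotone R := monotone_nat_of_le_succ hchain
  have hdir : Directed (· ≤ ·) R := hmono.directed_le
  set S := ⨆ i, R i with hS
  have hmem : ∀ x : T, x ∈ S ↔ ∃ i, x ∈ R i := fun x =>
    Subring.mem_iSup_of_directed hdir
  have hle : ∀ i, R i ≤ S := fun i => le_iSup R i
  -- units: elements of S not in m are units of S
  have hunit : ∀ x : S, (x : T) ∉ IsLocalRing.maximalIdeal T → IsUnit x := by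
    rintro ⟨x, hx⟩ hxm
    obtain ⟨i, hi⟩ := (hmem x).mp hx
    obtain ⟨⟨hloc, heq⟩, _, _, _⟩ := (hCGIP i).1
    have hy : IsUnit (⟨x, hi⟩ : R i) := by
      by_contra hne
      have : (⟨x, hi⟩ : R i) ∈ @IsLocalRing.maximalIdeal (R i) _ hloc := hne
      rw [heq, Ideal.mem_comap] at this
      exact hxm this
    have := hy.map (Subring.inclusion (hle i))
    convert this using 1
    rfl
  have hnu : ∀ x : S, ¬IsUnit x → (x : T) ∈ IsLocalRing.maximalIdeal T := by
    intro x hx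
    by_contra h
    exact hx (hunit x h)
  have hnu' : ∀ x : S, (x : T) ∈ IsLocalRing.maximalIdeal T → ¬IsUnit x := by
    intro x hx hux
    have : IsUnit (x : T) := hux.map S.subtype
    exact hx this
  have hlocS : IsLocalRing S := by
    apply IsLocalRing.of_isUnit_or_isUnit_one_sub_self
    intro a
    by_cases ha : (a : T) ∈ IsLocalRing.maximalIdeal T
    · right
      apply hunit
      intro h
      have : (1 : T) ∈ IsLocalRing.maximalIdeal T := by
        have h2 := Ideal.add_mem (IsLocalRing.maximalIdeal T) ha h
        have h3 : (a : T) + ((1 : S) - a : S) = 1 := by push_cast; ring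
        rwa [h3] at h2
      exact (IsLocalRing.maximalIdeal.isMaximal T).ne_top ((Ideal.eq_top_iff_one _).mpr this)
    · exact Or.inl (hunit a ha)
  refine ⟨⟨⟨hlocS, ?_⟩, ?_, ?_, ?_⟩, ?_⟩
  · -- maximal ideal equality
    ext x
    constructor
    · intro hx
      rw [Ideal.mem_comap]
      exact hnu x hx
    · intro hx
      rw [Ideal.mem_comap] at hx
      exact hnu' x hx
  · -- infinite
    have : Infinite (R 0) := (hCGIP 0).1.2.1
    exact Infinite.of_injective (fun x : R 0 => (⟨(x : T), hle 0 x.2⟩ : S))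
      (fun a b h => by apply Subtype.ext; exact congrArg (fun y : S => (y : T)) h)
  · -- intersection condition
    intro p hp p' hp'
    constructor
    · intro hcomap
      have h0 := (hCGIP 0).1.2.2.1 p hp p' hp'
      apply h0.mp
      ext z
      rw [Ideal.mem_comap, Ideal.mem_comap]
      have hz : (z : T) ∈ S := hle 0 z.2
      have := Ideal.ext_iff.mp hcomap ⟨(z : T), hz⟩
      rw [Ideal.mem_comap, Ideal.mem_comap] at this
      exact this
    · intro hclass
      ext x
      rw [Ideal.mem_comap, Ideal.mem_comap]
      obtain ⟨i, hi⟩ := (hmem x).mp x.2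
      have hiq := ((hCGIP i).1.2.2.1 p hp p' hp').mpr hclass
      have := Ideal.ext_iff.mp hiq ⟨(x : T), hi⟩
      rw [Ideal.mem_comap, Ideal.mem_comap] at this
      exact this
  · -- annihilator condition
    intro p hp hns a haS hap
    obtain ⟨i, hi⟩ := (hmem a).mp haS
    exact (hCGIP i).1.2.2.2 p hp hns a hi hap
  · -- countable
    have heq : (S : Set T) = ⋃ i, (R i : Set T) := by
      ext x
      simp only [Set.mem_iUnion, SetLike.mem_coe]
      exact hmem x
    have hcount : (S : Set T).Countable := by
      rw [heq]
      exact Set.countable_iUnion fun i => Set.countable_coe_iff.mp (hCGIP i).2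
    exact hcount.to_subtype
end

section
/- Let R be a countable Noetherian subring of a complete local (Noetherian) ring T. For each p ∈ Spec(R), writing Sing(T/pT) = V(I_p/pT) for an ideal I_p of T containing pT (such an ideal exists since T/pT is excellent, so its singular locus is closed), define B_R = ∪_{p ∈ Spec(R)} {q ∈ Spec(T) : q is minimal over I_p}. Then B_R is countable and contains no nonsingular minimal prime ideal of T. -/
/-! Common definitions: regular/singular primes, catenary and universally catenary rings,
excellent local rings, quasi-local subrings, completions of subrings, the invariants
`d₁(T)` and `d₂(T)`, feasible partitions and (C)IP-subrings, partitions of `Min(T)` and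
(C)GIP-subrings, and witnesses for "T is the completion of a countable (excellent) local
ring". -/

universe u v

section Aux

/-- A nontrivial commutative ring with a subsingleton prime spectrum has Krull dimension 0. -/
lemma aux_ringKrullDim_eq_zero (L : Type v) [CommRing L] [Nontrivial L]
    (h : Subsingleton (PrimeSpectrum L)) : ringKrullDim L = 0 := by
  have : Nonempty (PrimeSpectrum L) := inferInstance
  haveI : Unique (PrimeSpectrum L) := uniqueOfSubsingleton (Classical.choice this)
  exact Order.krullDim_eq_zero_of_unique

/-- A Noetherian local ring with trivial maximal ideal is a regular local ring. -/
lemma aux_isRegularLocal_of_maximalIdeal_eq_bot (L : Type v) [CommRing L] [IsLocalRing L]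
    (hN : IsNoetherianRing L) (h : IsLocalRing.maximalIdeal L = ⊥) : IsRegularLocal L := by
  refine ⟨inferInstance, hN, ∅, by simp [h], ?_⟩
  have hsub : Subsingleton (PrimeSpectrum L) := by
    constructor
    intro P Q
    have hP : P.asIdeal = ⊥ :=
      le_bot_iff.mp (h ▸ IsLocalRing.le_maximalIdeal P.isPrime.ne_top)
    have hQ : Q.asIdeal = ⊥ :=
      le_bot_iff.mp (h ▸ IsLocalRing.le_maximalIdeal Q.isPrime.ne_top)
    exact PrimeSpectrum.ext (hP.trans hQ.symm)
  rw [aux_ringKrullDim_eq_zero L hsub]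
  simp
  rfl

/-- If `q` is a nonsingular minimal prime of `T`, every element of `q` is annihilated by an
element outside `q`. -/
lemma aux_annihilator {T : Type v} [CommRing T] {q : Ideal T} (hq : q ∈ minimalPrimes T)
    (hreg : NonsingularAt q) : ∀ x ∈ q, ∃ c : T, c * x = 0 ∧ c ∉ q := by
  obtain ⟨hqp, _, hN, s, hspan, hcard⟩ := hreg
  haveI := hqp
  -- the localization at a minimal prime has a unique prime ideal
  have hsub : Subsingleton (PrimeSpectrum (Localization.AtPrime q)) := by
    constructor
    intro P Q
    haveI := P.isPrime
    haveI := Q.isPrime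
    have key : ∀ P : Ideal (Localization.AtPrime q), P.IsPrime →
        P = IsLocalRing.maximalIdeal (Localization.AtPrime q) := by
      intro P hP
      have h1 : P.comap (algebraMap T (Localization.AtPrime q)) ≤ q := by
        intro x hx
        by_contra hxq
        exact hP.ne_top (Ideal.eq_top_of_isUnit_mem _ hx
          (IsLocalization.map_units (Localization.AtPrime q) (⟨x, hxq⟩ : q.primeCompl)))
      have h2 : q ≤ P.comap (algebraMap T (Localization.AtPrime q)) :=
        hq.2 ⟨Ideal.comap_isPrime _ _, bot_le⟩ h1
      apply le_antisymm (IsLocalRing.le_maximalIdeal hP.ne_top)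
      rw [← Localization.AtPrime.map_eq_maximalIdeal, Ideal.map_le_iff_le_comap]
      exact h2
    exact PrimeSpectrum.ext ((key P.asIdeal P.isPrime).trans (key Q.asIdeal Q.isPrime).symm)
  have hdim : ringKrullDim (Localization.AtPrime q) = 0 :=
    aux_ringKrullDim_eq_zero _ hsub
  rw [hdim] at hcard
  have hs0 : s.card = 0 := by
    have h' : (s.card : WithBot (WithTop ℕ)) = ((0:ℕ) : WithBot (WithTop ℕ)) := hcard
    exact_mod_cast h'
  have hsempty : s = ∅ := Finset.card_eq_zero.mp hs0
  rw [hsempty] at hspan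
  simp only [Finset.coe_empty, Ideal.span_empty] at hspan
  have hmax : IsLocalRing.maximalIdeal (Localization.AtPrime q) = ⊥ := hspan.symm
  intro x hx
  have hmem : algebraMap T (Localization.AtPrime q) x ∈
      IsLocalRing.maximalIdeal (Localization.AtPrime q) :=
    (IsLocalization.AtPrime.to_map_mem_maximal_iff _ q x).mpr hx
  rw [hmax, Ideal.mem_bot] at hmem
  obtain ⟨m, hm⟩ := (IsLocalization.map_eq_zero_iff q.primeCompl _ x).mp hmem
  exact ⟨m, hm, m.2⟩

end Aux

/-- Let `R` be a countable Noetherian subring of a complete local ring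
`T`. For each prime `p` of `R` let `I p` be an ideal of `T` containing `pT` with
`Sing(T/pT) = V(I p / pT)`. Then `B_R`, the set of primes of `T` minimal over some
`I p`, is countable and contains no nonsingular minimal prime of `T`. -/
theorem statement_17 (T : Type u) [CommRing T] [IsNoetherianRing T] [IsLocalRing T]
    [IsAdicComplete (IsLocalRing.maximalIdeal T) T]
    (R : Subring T) (hRc : Countable R) (hRn : IsNoetherianRing ↥R)
    (I : Ideal ↥R → Ideal T)
    (hle : ∀ p : Ideal ↥R, p.IsPrime → Ideal.map R.subtype p ≤ I p)
    (hsing : ∀ p : Ideal ↥R, p.IsPrime →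
      {q : PrimeSpectrum (T ⧸ Ideal.map R.subtype p) | ¬NonsingularAt q.asIdeal} =
        PrimeSpectrum.zeroLocus
          (((I p).map (Ideal.Quotient.mk (Ideal.map R.subtype p)) : Ideal _) :
            Set (T ⧸ Ideal.map R.subtype p))) :
    Set.Countable {q : Ideal T | ∃ p : Ideal ↥R, p.IsPrime ∧ q ∈ (I p).minimalPrimes} ∧
      ∀ q ∈ minimalPrimes T, NonsingularAt q →
        q ∉ {q : Ideal T | ∃ p : Ideal ↥R, p.IsPrime ∧ q ∈ (I p).minimalPrimes} := by
  constructor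
  · -- countability
    haveI : Countable (Ideal ↥R) := by
      have hsurj : Function.Surjective (fun s : Finset ↥R => Ideal.span (s : Set ↥R)) := by
        intro J
        obtain ⟨s, hs⟩ := IsNoetherian.noetherian J
        exact ⟨s, hs⟩
      exact hsurj.countable
    have hsub : {q : Ideal T | ∃ p : Ideal ↥R, p.IsPrime ∧ q ∈ (I p).minimalPrimes} ⊆
        ⋃ p : Ideal ↥R, (I p).minimalPrimes := by
      rintro q ⟨p, _, hq⟩
      exact Set.mem_iUnion.mpr ⟨p, hq⟩
    refine Set.Countable.mono hsub (Set.countable_iUnion fun p => ?_)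
    have hfin : ((I p).minimalPrimes).Finite := by
      rw [Ideal.minimalPrimes_eq_comap]
      exact (minimalPrimes.finite_of_isNoetherianRing _).image _
    exact hfin.countable
  · -- no nonsingular minimal prime of T is in the set
    rintro q hqmin hns ⟨p, hp, hqIp⟩
    set J : Ideal T := Ideal.map R.subtype p with hJ
    set f : T →+* T ⧸ J := Ideal.Quotient.mk J with hf
    have hfs : Function.Surjective f := Ideal.Quotient.mk_surjective
    haveI hqprime : q.IsPrime := hqIp.1.1
    have hIq : I p ≤ q := hqIp.1.2
    have hJq : J ≤ q := (hle p hp).trans hIq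
    have hker : RingHom.ker f ≤ q := by rw [hf, Ideal.mk_ker]; exact hJq
    have hqbar_prime : (q.map f).IsPrime := Ideal.map_isPrime_of_surjective hfs hker
    -- the image of q lies in the singular locus of T/J
    have hzero : (⟨q.map f, hqbar_prime⟩ : PrimeSpectrum (T ⧸ J)) ∈
        PrimeSpectrum.zeroLocus (((I p).map f : Ideal (T ⧸ J)) : Set (T ⧸ J)) := by
      rw [PrimeSpectrum.mem_zeroLocus]
      exact fun x hx => Ideal.map_mono hIq hx
    rw [← hsing p hp] at hzero
    apply hzero
    -- but the localization of T/J at the image of q is regular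
    refine ⟨hqbar_prime, ?_⟩
    haveI : IsNoetherianRing (T ⧸ J) := inferInstance
    have hNloc : IsNoetherianRing (Localization.AtPrime (q.map f)) :=
      IsLocalization.isNoetherianRing (q.map f).primeCompl _ inferInstance
    refine aux_isRegularLocal_of_maximalIdeal_eq_bot _ hNloc ?_
    rw [← Localization.AtPrime.map_eq_maximalIdeal]
    refine le_bot_iff.mp (Ideal.map_le_iff_le_comap.mpr ?_)
    intro x hx
    obtain ⟨y, hy, rfl⟩ := (Ideal.mem_map_iff_of_surjective f hfs).mp hx
    obtain ⟨c, hc0, hcq⟩ := aux_annihilator hqmin hns y hy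
    have hcomap : Ideal.comap f (q.map f) = q := by
      rw [Ideal.comap_map_of_surjective f hfs, ← RingHom.ker_eq_comap_bot, sup_eq_left.mpr hker]
    have hfc : f c ∈ (q.map f).primeCompl := by
      intro hmem
      exact hcq (by rw [← hcomap]; exact hmem)
    rw [Ideal.mem_comap, Ideal.mem_bot]
    exact (IsLocalization.map_eq_zero_iff (q.map f).primeCompl _ _).mpr
      ⟨⟨f c, hfc⟩, by rw [← map_mul, hc0, map_zero]⟩
end
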